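/- arXiv:1903.00147 — 3 statements merged into one kernel-verified Lean document; each statement's English description precedes it below -/
import Mathlib

section
/- Let f and g be pdfs on ℝⁿ with f, g ∈ C₀(ℝⁿ). Then for every ε > 0 there exists a finite mixture h = Σᵢ₌₁ᵐ cᵢ σᵢ⁻ⁿ g((x − μᵢ)/σᵢ) with μᵢ ∈ ℝⁿ, σᵢ > 0, cᵢ ≥ 0, Σ cᵢ = 1, such that ‖f − h‖_∞ < ε. -/
open MeasureTheory Filter Metric Topology

open Set Module Function

/-! Convolving `f` with the rescaled kernel `σ⁻ⁿ g(·/σ)` approximates `f` uniformly as `σ → 0`,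
because `f` is bounded and uniformly continuous and `g` has small tails. For a fixed `σ`, the
convolution `∫ f(y) σ⁻ⁿ g((x - y)/σ) dy` is in turn approximated, uniformly in `x`, by a Riemann
sum: partition a large ball into finitely many pieces, each inside a small ball, add the complement
of the large ball as one more piece, and on each piece replace `y` by the centre of its small ball,
with the `f`-mass of the piece as weight. The translates of the kernel are uniformly equicontinuous,
which controls the pieces inside the large ball, and the complement carries little mass. The
weights are nonnegative with total mass `∫ f = 1`, so this Riemann sum is a location-scale mixture
of `g`, even with a single common scale. -/

theorem IsCompact.exists_partition_compl_subset_ball {X : Type*} [MetricSpace X]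
    [MeasurableSpace X] [OpensMeasurableSpace X] [Nonempty X] {K : Set X} (hK : IsCompact K)
    {ρ : ℝ} (hρ : 0 < ρ) :
    ∃ (m : ℕ) (A : Fin (m + 1) → Set X) (p : Fin (m + 1) → X),
      (∀ i, MeasurableSet (A i)) ∧ Pairwise (Disjoint on A) ∧ (⋃ i, A i) = univ ∧
      A 0 = Kᶜ ∧ ∀ i : Fin m, A i.succ ⊆ ball (p i.succ) ρ := by
  obtain ⟨t, -, ht, hKt⟩ := hK.finite_cover_balls hρ
  obtain ⟨m, q, -, rfl⟩ := ht.fin_param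
  let B : Fin (m + 1) → Set X := Fin.cons Kᶜ fun i => ball (q i) ρ
  have hB : ∀ i, MeasurableSet (B i) :=
    Fin.cases hK.isClosed.measurableSet.compl fun i => measurableSet_ball
  refine ⟨m, disjointed B, Fin.cons (Classical.arbitrary X) q,
    fun i => disjointedRec (fun _ _ hs => hs.diff (hB _)) (hB i), disjoint_disjointed B,
    ?_, disjointed_of_isMin B isMin_bot, fun i => disjointed_subset B i.succ⟩
  rw [iUnion_disjointed, eq_univ_iff_forall]
  intro x
  by_cases hx : x ∈ K
  · obtain ⟨_, ⟨i, rfl⟩, hxi⟩ := mem_iUnion₂.1 (hKt hx)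
    exact mem_iUnion.2 ⟨i.succ, hxi⟩
  · exact mem_iUnion.2 ⟨0, hx⟩

theorem abs_integral_mul_sub_sum_le {X ι : Type*} [MeasurableSpace X] {μ : Measure X}
    [Fintype ι] {A : ι → Set X} (hA : ∀ i, MeasurableSet (A i)) (hAd : Pairwise (Disjoint on A))
    (hAU : (⋃ i, A i) = univ) {f φ : X → ℝ} (hf0 : ∀ x, 0 ≤ f x) (hf : Integrable f μ)
    (hfφ : Integrable (fun x => f x * φ x) μ) (p : ι → X) (ω : ι → ℝ)
    (hω : ∀ i, ∀ y ∈ A i, |φ y - φ (p i)| ≤ ω i) :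
    |∫ x, f x * φ x ∂μ - ∑ i, (∫ x in A i, f x ∂μ) * φ (p i)| ≤
      ∑ i, (∫ x in A i, f x ∂μ) * ω i := by
  have hsplit : ∫ x, f x * φ x ∂μ = ∑ i, ∫ x in A i, f x * φ x ∂μ := by
    rw [← setIntegral_univ, ← hAU, integral_iUnion_fintype hA hAd fun i => hfφ.integrableOn]
  have hpiece : ∀ i, |∫ x in A i, f x * φ x ∂μ - (∫ x in A i, f x ∂μ) * φ (p i)| ≤
      (∫ x in A i, f x ∂μ) * ω i := by
    intro i
    rw [← integral_mul_const, ← integral_mul_const, ← integral_sub hfφ.integrableOn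
      (hf.mul_const _).integrableOn]
    refine abs_integral_le_integral_abs.trans <| setIntegral_mono_on
      (hfφ.sub (hf.mul_const _)).abs.integrableOn (hf.mul_const _).integrableOn (hA i)
      fun y hy => ?_
    rw [← mul_sub, abs_mul, abs_of_nonneg (hf0 y)]
    exact mul_le_mul_of_nonneg_left (hω i y hy) (hf0 y)
  rw [hsplit, ← Finset.sum_sub_distrib]
  exact (Finset.abs_sum_le_sum_abs _ _).trans (Finset.sum_le_sum fun i _ => hpiece i)

theorem tendsto_setIntegral_compl_closedBall {X : Type*} [PseudoMetricSpace X] [MeasurableSpace X]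
    [OpensMeasurableSpace X] {μ : Measure X} {f : X → ℝ} (hf : Integrable f μ) (x : X) :
    Tendsto (fun r : ℝ => ∫ y in (closedBall x r)ᶜ, f y ∂μ) atTop (𝓝 0) := by
  have h :=
    (aecover_closedBall (μ := μ) (x := x) tendsto_id).integral_tendsto_of_countably_generated hf
  have heq : ∀ r : ℝ,
      ∫ y in (closedBall x r)ᶜ, f y ∂μ = ∫ y, f y ∂μ - ∫ y in closedBall x r, f y ∂μ :=
    fun r => eq_sub_of_add_eq' (integral_add_compl measurableSet_closedBall hf)
  simpa only [heq, sub_self, id] using h.const_sub (∫ y, f y ∂μ)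

theorem exists_forall_abs_le_of_tendsto_cocompact {X : Type*} [TopologicalSpace X] {f : X → ℝ}
    (hc : Continuous f) (h : Tendsto f (cocompact X) (𝓝 0)) : ∃ C, ∀ x, |f x| ≤ C := by
  obtain ⟨C, hC⟩ := isBounded_iff_forall_norm_le.1
    (ZeroAtInftyContinuousMap.isBounded_range ⟨⟨f, hc⟩, h⟩)
  exact ⟨C, fun x => hC _ ⟨x, rfl⟩⟩

section LocationScale

variable {E : Type*} [NormedAddCommGroup E] [NormedSpace ℝ E]

noncomputable def locScale (g : E → ℝ) (p : E) (σ : ℝ) (x : E) : ℝ :=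
  (σ ^ finrank ℝ E)⁻¹ * g (σ⁻¹ • (x - p))

theorem abs_locScale_le {g : E → ℝ} {C : ℝ} (hgC : ∀ x, |g x| ≤ C) {σ : ℝ} (hσ : 0 < σ)
    (p x : E) : |locScale g p σ x| ≤ (σ ^ finrank ℝ E)⁻¹ * C := by
  rw [locScale, abs_mul, abs_of_pos (by positivity)]
  exact mul_le_mul_of_nonneg_left (hgC _) (by positivity)

theorem UniformContinuous.uniformEquicontinuous_locScale {g : E → ℝ} (hg : UniformContinuous g)
    (σ : ℝ) : UniformEquicontinuous fun x p => locScale g p σ x := by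
  have hh : UniformContinuous fun v : E => (σ ^ finrank ℝ E)⁻¹ * g (σ⁻¹ • v) :=
    (hg.comp (uniformContinuous_id.const_smul σ⁻¹)).const_smul (σ ^ finrank ℝ E)⁻¹
  rw [Metric.uniformEquicontinuous_iff]
  intro ε hε
  obtain ⟨δ, hδ, hhδ⟩ := Metric.uniformContinuous_iff.1 hh ε hε
  exact ⟨δ, hδ, fun p q hpq x => hhδ (by rwa [dist_sub_left])⟩

variable [FiniteDimensional ℝ E] [MeasurableSpace E] [BorelSpace E] (μ : Measure E)
  [μ.IsAddHaarMeasure]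

theorem integral_mul_locScale (F g : E → ℝ) {σ : ℝ} (hσ : 0 < σ) (x : E) :
    ∫ y, F y * locScale g y σ x ∂μ = ∫ w, F (x - σ • w) * g w ∂μ := by
  have h := Measure.integral_comp_smul_of_nonneg μ (fun v => F (x - v) * g (σ⁻¹ • v)) σ
    (hR := hσ.le)
  simp only [inv_smul_smul₀ hσ.ne', smul_eq_mul] at h
  rw [h, ← integral_const_mul,
    ← integral_sub_left_eq_self (fun v => (σ ^ finrank ℝ E)⁻¹ * (F (x - v) * g (σ⁻¹ • v))) μ x]
  simp only [sub_sub_cancel, locScale]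
  congr 1; ext y; ring

theorem exists_pos_forall_abs_sub_integral_mul_locScale_le {f g : E → ℝ} {C : ℝ}
    (hf : UniformContinuous f) (hfC : ∀ x, |f x| ≤ C) (hg0 : ∀ x, 0 ≤ g x)
    (hg : Integrable g μ) (hg1 : ∫ x, g x ∂μ = 1) {ε : ℝ} (hε : 0 < ε) :
    ∃ σ > 0, ∀ x, |f x - ∫ y, f y * locScale g y σ x ∂μ| ≤ ε := by
  obtain ⟨r, hr, hfr⟩ := Metric.uniformContinuous_iff.1 hf (ε / 2) (half_pos hε)
  obtain ⟨R, hRtail, hR⟩ : ∃ R, 2 * C * ∫ w in (closedBall 0 R)ᶜ, g w ∂μ < ε / 2 ∧ 0 < R := by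
    have h := (tendsto_setIntegral_compl_closedBall hg 0).const_mul (2 * C)
    rw [mul_zero] at h
    exact ((h.eventually (gt_mem_nhds (half_pos hε))).and (eventually_gt_atTop 0)).exists
  refine ⟨r / (2 * R), by positivity, fun x => ?_⟩
  set σ := r / (2 * R) with hσ
  have hgi : Integrable ((closedBall (0 : E) R)ᶜ.indicator g) μ :=
    hg.indicator measurableSet_closedBall.compl
  have hfc := hf.continuous
  have hfg : Integrable (fun w => f (x - σ • w) * g w) μ :=
    hg.bdd_mul (by fun_prop) (Eventually.of_forall fun w => hfC _)
  have hdiff : Integrable (fun w => |f x - f (x - σ • w)| * g w) μ :=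
    hg.bdd_mul (c := 2 * C) (by fun_prop) (Eventually.of_forall fun w =>
      (abs_abs _).trans_le <| (abs_sub _ _).trans (by linarith [hfC x, hfC (x - σ • w)]))
  have hbound : ∀ w, |f x - f (x - σ • w)| * g w ≤
      ε / 2 * g w + 2 * C * (closedBall (0 : E) R)ᶜ.indicator g w := by
    intro w
    by_cases hw : w ∈ closedBall (0 : E) R
    · have hdist : dist x (x - σ • w) < r := by
        rw [dist_self_sub_right, norm_smul, Real.norm_of_nonneg (by positivity)]
        have := mem_closedBall_zero_iff.1 hw
        calc σ * ‖w‖ ≤ σ * R := by gcongr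
          _ < r := by rw [hσ]; field_simp; linarith
      rw [indicator_of_notMem (notMem_compl_iff.2 hw), mul_zero, add_zero]
      exact mul_le_mul_of_nonneg_right (by simpa [Real.dist_eq] using (hfr hdist).le) (hg0 w)
    · rw [indicator_of_mem hw]
      have : |f x - f (x - σ • w)| ≤ 2 * C :=
        (abs_sub _ _).trans (by linarith [hfC x, hfC (x - σ • w)])
      nlinarith [hg0 w]
  rw [integral_mul_locScale μ f g (by positivity) x]
  calc |f x - ∫ w, f (x - σ • w) * g w ∂μ|
      = |∫ w, (f x - f (x - σ • w)) * g w ∂μ| := by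
        simp only [sub_mul]
        rw [integral_sub (hg.const_mul _) hfg, integral_const_mul, hg1, mul_one]
    _ ≤ ∫ w, |f x - f (x - σ • w)| * g w ∂μ := by
        refine abs_integral_le_integral_abs.trans_eq (integral_congr_ae ?_)
        exact Eventually.of_forall fun w => by simp only [abs_mul, abs_of_nonneg (hg0 w)]
    _ ≤ ∫ w, (ε / 2 * g w + 2 * C * (closedBall (0 : E) R)ᶜ.indicator g w) ∂μ :=
        integral_mono hdiff ((hg.const_mul _).add (hgi.const_mul _)) hbound
    _ = ε / 2 + 2 * C * ∫ w in (closedBall (0 : E) R)ᶜ, g w ∂μ := by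
        rw [integral_add (hg.const_mul _) (hgi.const_mul _), integral_const_mul,
          integral_const_mul, hg1, mul_one, integral_indicator measurableSet_closedBall.compl]
    _ ≤ ε := by linarith

theorem exists_sum_locScale_forall_abs_sub_le {f g : E → ℝ} (hf0 : ∀ x, 0 ≤ f x)
    (hf : Integrable f μ) (hfc : Continuous f) (hfC0 : Tendsto f (cocompact E) (𝓝 0))
    (hg0 : ∀ x, 0 ≤ g x) (hg : Integrable g μ) (hg1 : ∫ x, g x ∂μ = 1) (hgc : Continuous g)
    (hgC0 : Tendsto g (cocompact E) (𝓝 0)) {ε : ℝ} (hε : 0 < ε) :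
    ∃ (m : ℕ) (c : Fin m → ℝ) (p : Fin m → E) (σ : ℝ), 0 < σ ∧ (∀ i, 0 ≤ c i) ∧
      ∑ i, c i = ∫ x, f x ∂μ ∧ ∀ x, |f x - ∑ i, c i * locScale g (p i) σ x| ≤ ε := by
  obtain ⟨Cf, hCf⟩ := exists_forall_abs_le_of_tendsto_cocompact hfc hfC0
  obtain ⟨Cg, hCg⟩ := exists_forall_abs_le_of_tendsto_cocompact hgc hgC0
  obtain ⟨σ, hσ, hconv⟩ := exists_pos_forall_abs_sub_integral_mul_locScale_le μ
    (hfc.uniformContinuous_of_tendsto_cocompact hfC0) hCf hg0 hg hg1 (half_pos hε)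
  set I := ∫ x, f x ∂μ
  have hI : 0 ≤ I := integral_nonneg hf0
  set B := (σ ^ finrank ℝ E)⁻¹ * Cg
  have hB : ∀ p x, |locScale g p σ x| ≤ B := abs_locScale_le hCg hσ
  set δ := ε / (4 * (I + 1)) with hδ
  obtain ⟨ρ, hρ, hosc⟩ := Metric.uniformEquicontinuous_iff.1
    ((hgc.uniformContinuous_of_tendsto_cocompact hgC0).uniformEquicontinuous_locScale σ) δ
    (by positivity)
  obtain ⟨N, hN⟩ : ∃ N : ℝ, (∫ y in (closedBall 0 N)ᶜ, f y ∂μ) * (2 * B) < ε / 4 := by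
    have h := (tendsto_setIntegral_compl_closedBall hf 0).mul_const (2 * B)
    rw [zero_mul] at h
    exact (h.eventually (gt_mem_nhds (by positivity))).exists
  obtain ⟨m, A, p, hA, hAd, hAU, hA0, hAp⟩ :=
    (isCompact_closedBall (0 : E) N).exists_partition_compl_subset_ball hρ
  set c := fun i => ∫ y in A i, f y ∂μ
  have hc0 : ∀ i, 0 ≤ c i := fun i => setIntegral_nonneg (hA i) fun y _ => hf0 y
  have hcsum : ∑ i, c i = I := by
    rw [← integral_iUnion_fintype hA hAd fun i => hf.integrableOn, hAU, setIntegral_univ]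
  let ω : Fin (m + 1) → ℝ := Fin.cons (2 * B) fun _ => δ
  have hcω : ∑ i, c i * ω i ≤ ε / 2 := by
    rw [Fin.sum_univ_succ] at hcsum ⊢
    simp only [ω, Fin.cons_zero, Fin.cons_succ, ← Finset.sum_mul]
    have hbulk : (∑ j : Fin m, c j.succ) * δ ≤ ε / 4 :=
      calc (∑ j : Fin m, c j.succ) * δ ≤ I * δ := by gcongr; linarith [hc0 0]
        _ ≤ ε / 4 := by rw [hδ]; field_simp; linarith
    have hc0' : c 0 = ∫ y in (closedBall 0 N)ᶜ, f y ∂μ := by simp only [c, hA0]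
    rw [hc0']
    linarith
  refine ⟨m + 1, c, p, σ, hσ, hc0, hcsum, fun x => ?_⟩
  have hriemann := abs_integral_mul_sub_sum_le hA hAd hAU hf0 hf
    (hf.mul_bdd (by unfold locScale; fun_prop) (Eventually.of_forall fun y => hB y x)) p
    ω <| Fin.cases
      (fun y _ => (abs_sub _ _).trans <| by
        simp only [ω, Fin.cons_zero]; linarith [hB y x, hB (p 0) x])
      (fun j y hy => (hosc y (p j.succ) (hAp j hy) x).le)
  calc |f x - ∑ i, c i * locScale g (p i) σ x|
      ≤ |f x - ∫ y, f y * locScale g y σ x ∂μ|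
        + |∫ y, f y * locScale g y σ x ∂μ - ∑ i, c i * locScale g (p i) σ x| :=
        abs_sub_le _ _ _
    _ ≤ ε := by linarith [hconv x]

end LocationScale

/-- Theorem (a): if `f, g` are pdfs in `C₀(ℝⁿ)`, then for every `ε > 0` there is a finite
location-scale mixture of `g` within `ε` of `f` in uniform norm. -/
theorem stmt_5 (n : ℕ) (f g : EuclideanSpace ℝ (Fin n) → ℝ)
    (hf0 : ∀ x, 0 ≤ f x) (hfint : Integrable f) (hf1 : ∫ x, f x = 1)
    (hfc : Continuous f)
    (hfC0 : Tendsto f (cocompact (EuclideanSpace ℝ (Fin n))) (𝓝 0))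
    (hg0 : ∀ x, 0 ≤ g x) (hgint : Integrable g) (hg1 : ∫ x, g x = 1)
    (hgc : Continuous g)
    (hgC0 : Tendsto g (cocompact (EuclideanSpace ℝ (Fin n))) (𝓝 0))
    (ε : ℝ) (hε : 0 < ε) :
    ∃ (m : ℕ) (c : Fin m → ℝ) (μ : Fin m → EuclideanSpace ℝ (Fin n)) (σ : Fin m → ℝ),
      (∀ i, 0 < σ i) ∧ (∀ i, 0 ≤ c i) ∧ (∑ i, c i = 1) ∧
      eLpNorm (fun x =>
          f x - ∑ i, c i * ((σ i) ^ n)⁻¹ * g ((σ i)⁻¹ • (x - μ i))) ⊤ volume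
        < ENNReal.ofReal ε := by
  obtain ⟨m, c, p, σ, hσ, hc0, hcsum, happrox⟩ := exists_sum_locScale_forall_abs_sub_le volume
    hf0 hfint hfc hfC0 hg0 hgint hg1 hgc hgC0 (half_pos hε)
  refine ⟨m, c, p, fun _ => σ, fun _ => hσ, hc0, hcsum.trans hf1, ?_⟩
  refine (eLpNorm_exponent_top.trans_le (eLpNormEssSup_le_of_ae_bound (C := ε / 2)
    (Eventually.of_forall fun x => ?_))).trans_lt
    ((ENNReal.ofReal_lt_ofReal_iff hε).2 (half_lt_self hε))
  simpa only [locScale, finrank_euclideanSpace_fin, mul_assoc, Real.norm_eq_abs] using happrox x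
end

section
/- Let f be a bounded continuous function on ℝⁿ that is also a pdf, let g ∈ C₀(ℝⁿ) be a pdf, and let K ⊂ ℝⁿ be compact. Then for every ε > 0 there exists a finite mixture h = Σᵢ₌₁ᵐ cᵢ σᵢ⁻ⁿ g((x − μᵢ)/σᵢ) with cᵢ ≥ 0, Σ cᵢ = 1, such that sup_{x ∈ K} |f(x) − h(x)| < ε. -/
/-!
Convolving `f` with the rescaled kernel `g_σ z = σ⁻ⁿ g (σ⁻¹ z)` approximates `f` uniformly on `K`
as `σ → 0`: `g` has integral one, so `f x - (g_σ ⋆ f) x = ∫ g u (f x - f (x - σ u)) du`, and this is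
small because `f` is bounded and uniformly continuous near `K` while the tail of `g` is small.
For a fixed `σ`, `(g_σ ⋆ f) x` is the integral of `y ↦ g_σ (x - y)` against the probability
measure `f(y) dy`. These integrands are bounded and uniformly equicontinuous in `x`, since `g` is
in `C₀`. Replacing `y` by `q y` for a simple function `q` that is close to the identity in measure
therefore changes all of them by little, and the integral of `y ↦ g_σ (x - q y)` is already a finite
mixture of translates of `g_σ`, with weights the masses of the fibres of `q`.
-/

open MeasureTheory Filter Metric Topology

theorem tendstoUniformlyOn_comp_sub_nhds_zero {G β : Type*} [TopologicalSpace G] [AddGroup G]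
    [IsTopologicalAddGroup G] [UniformSpace β] {f : G → β} (hf : Continuous f) {K : Set G}
    (hK : IsCompact K) : TendstoUniformlyOn (fun v x => f (x - v)) f (𝓝 0) K := by
  intro u hu
  obtain ⟨V, hV, hVu⟩ := hK.mem_uniformity_of_prod (f := fun v x => f (x - v)) (s := Set.univ)
    (hf.comp (continuous_snd.sub continuous_fst)).continuousOn (Set.mem_univ 0)
    (symm_le_uniformity hu)
  rw [nhdsWithin_univ] at hV
  filter_upwards [hV] with v hv x hx
  simpa using hVu v hv x hx

theorem tendsto_setIntegral_compl_closedBall_s6 {E F : Type*} [SeminormedAddCommGroup E]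
    [MeasurableSpace E] [OpensMeasurableSpace E] [NormedAddCommGroup F] [NormedSpace ℝ F]
    {μ : Measure E} {h : E → F} (hh : Integrable h μ) :
    Tendsto (fun R : ℕ => ∫ x in (closedBall 0 R)ᶜ, h x ∂μ) atTop (𝓝 0) := by
  have hanti : Antitone fun R : ℕ => (closedBall (0 : E) R)ᶜ := fun _ _ hR =>
    Set.compl_subset_compl.2 (closedBall_subset_closedBall (Nat.cast_le.2 hR))
  have := tendsto_setIntegral_of_antitone (fun _ => measurableSet_closedBall.compl) hanti
    ⟨0, hh.integrableOn⟩
  rwa [← Set.compl_iUnion, iUnion_closedBall_nat, Set.compl_univ, Measure.restrict_empty,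
    integral_zero_measure] at this

section ApproximateIdentity

variable {E : Type*} [NormedAddCommGroup E] [NormedSpace ℝ E] [MeasurableSpace E]
  [OpensMeasurableSpace E] {μ : Measure E}

theorem integrable_mul_comp_sub_smul {g f : E → ℝ} (hg : Integrable g μ) (hf : Continuous f)
    {C : ℝ} (hC : ∀ x, |f x| ≤ C) (x : E) (σ : ℝ) :
    Integrable (fun u => g u * f (x - σ • u)) μ :=
  hg.mul_bdd (hf.comp (continuous_const.sub (continuous_const_smul σ))).aestronglyMeasurable
    (ae_of_all _ fun _ => hC _)

theorem tendstoUniformlyOn_integral_mul_comp_sub_smul {g f : E → ℝ} (hg : Integrable g μ)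
    (hg1 : ∫ u, g u ∂μ = 1) (hf : Continuous f) {C : ℝ} (hC : ∀ x, |f x| ≤ C) {K : Set E}
    (hK : IsCompact K) :
    TendstoUniformlyOn (fun (σ : ℝ) x => ∫ u, g u * f (x - σ • u) ∂μ) f (𝓝 0) K := by
  rw [Metric.tendstoUniformlyOn_iff]
  intro ε hε
  set G := ∫ u, ‖g u‖ ∂μ
  have hG : 1 ≤ G := by
    have := norm_integral_le_integral_norm (μ := μ) g
    rwa [hg1, norm_one] at this
  set η := ε / (2 * G)
  have hη : 0 < η := by positivity
  obtain ⟨R, hR⟩ : ∃ R : ℕ, 2 * C * ∫ u in (closedBall 0 R)ᶜ, ‖g u‖ ∂μ < ε / 2 := by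
    have := (tendsto_setIntegral_compl_closedBall_s6 hg.norm).const_mul (2 * C)
    rw [mul_zero] at this
    exact (this.eventually (gt_mem_nhds (half_pos hε))).exists
  obtain ⟨δ, hδ, hshift⟩ := Metric.eventually_nhds_iff.1 <|
    Metric.tendstoUniformlyOn_iff.1 (tendstoUniformlyOn_comp_sub_nhds_zero hf hK) η hη
  have hR1 : (0 : ℝ) < R + 1 := by positivity
  filter_upwards [ball_mem_nhds (0 : ℝ) (div_pos hδ hR1)] with σ hσ x hx
  have hpt : ∀ u, ‖g u * (f x - f (x - σ • u))‖ ≤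
      ‖g u‖ * η + 2 * C * (closedBall 0 R)ᶜ.indicator (fun u => ‖g u‖) u := by
    intro u
    rw [norm_mul, Real.norm_eq_abs (f x - _)]
    by_cases hu : u ∈ closedBall (0 : E) R
    · rw [Set.indicator_of_notMem (Set.notMem_compl_iff.2 hu), mul_zero, add_zero]
      refine mul_le_mul_of_nonneg_left ?_ (norm_nonneg _)
      have hsmall : dist (σ • u) 0 < δ := by
        rw [mem_ball, Real.dist_eq, sub_zero, lt_div_iff₀ hR1] at hσ
        rw [mem_closedBall, dist_zero_right] at hu
        rw [dist_zero_right, norm_smul, Real.norm_eq_abs]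
        nlinarith [abs_nonneg σ, norm_nonneg u]
      exact (hshift hsmall x hx).le
    · rw [Set.indicator_of_mem hu]
      have : |f x - f (x - σ • u)| ≤ 2 * C := by
        linarith [abs_sub (f x) (f (x - σ • u)), hC x, hC (x - σ • u)]
      nlinarith [norm_nonneg (g u)]
  have hbound : Integrable (fun u => ‖g u‖ * η + 2 * C *
      (closedBall 0 R)ᶜ.indicator (fun u => ‖g u‖) u) μ :=
    (hg.norm.mul_const η).add ((hg.norm.indicator measurableSet_closedBall.compl).const_mul _)
  have hdiff : f x - ∫ u, g u * f (x - σ • u) ∂μ = ∫ u, g u * (f x - f (x - σ • u)) ∂μ := by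
    simp_rw [mul_sub]
    rw [integral_sub (hg.mul_const _) (integrable_mul_comp_sub_smul hg hf hC x σ),
      integral_mul_const, hg1, one_mul]
  rw [Real.dist_eq, hdiff, ← Real.norm_eq_abs]
  calc _ ≤ ∫ u, ‖g u‖ * η + 2 * C * (closedBall 0 R)ᶜ.indicator (fun u => ‖g u‖) u ∂μ :=
        norm_integral_le_of_norm_le hbound (ae_of_all _ hpt)
    _ = G * η + 2 * C * ∫ u in (closedBall 0 R)ᶜ, ‖g u‖ ∂μ := by
        rw [integral_add (hg.norm.mul_const η)
          ((hg.norm.indicator measurableSet_closedBall.compl).const_mul _), integral_mul_const,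
          integral_const_mul, integral_indicator measurableSet_closedBall.compl]
    _ < ε := by
        have : G * η = ε / 2 := by
          have : G ≠ 0 := by positivity
          simp only [η]
          field_simp
        linarith

end ApproximateIdentity

section ScaledKernel

variable {E : Type*} [NormedAddCommGroup E] [NormedSpace ℝ E]

noncomputable def scaledKernel (g : E → ℝ) (σ : ℝ) (z : E) : ℝ :=
  (σ ^ Module.finrank ℝ E)⁻¹ * g (σ⁻¹ • z)

theorem abs_scaledKernel_le {g : E → ℝ} {B : ℝ} (hB : ∀ z, |g z| ≤ B) {σ : ℝ} (hσ : 0 < σ)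
    (z : E) : |scaledKernel g σ z| ≤ (σ ^ Module.finrank ℝ E)⁻¹ * B := by
  rw [scaledKernel, abs_mul, abs_of_pos (by positivity)]
  exact mul_le_mul_of_nonneg_left (hB _) (by positivity)

theorem UniformContinuous.scaledKernel {g : E → ℝ} (hg : UniformContinuous g) (σ : ℝ) :
    UniformContinuous (scaledKernel g σ) :=
  (hg.comp (uniformContinuous_const_smul σ⁻¹)).const_mul' _

theorem integral_mul_comp_sub_smul_eq_integral_scaledKernel [FiniteDimensional ℝ E]
    [MeasurableSpace E] [BorelSpace E] (μ : Measure E) [μ.IsAddHaarMeasure] (g f : E → ℝ)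
    {σ : ℝ} (hσ : 0 < σ) (x : E) :
    ∫ u, g u * f (x - σ • u) ∂μ = ∫ y, scaledKernel g σ (x - y) * f y ∂μ := by
  have h := μ.integral_comp_smul (fun w => g (σ⁻¹ • w) * f (x - w)) σ
  simp only [inv_smul_smul₀ hσ.ne'] at h
  rw [h, abs_of_pos (by positivity), smul_eq_mul, ← integral_sub_left_eq_self _ μ x,
    ← integral_const_mul]
  simp only [sub_sub_cancel, scaledKernel, mul_assoc]

end ScaledKernel

section Discretization

variable {X : Type*} [MeasurableSpace X]

theorem MeasureTheory.SimpleFunc.integral_comp_eq_sum {Y : Type*} {ν : Measure X}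
    [IsFiniteMeasure ν] (q : SimpleFunc X Y) (φ : Y → ℝ) :
    ∫ y, φ (q y) ∂ν = ∑ z ∈ q.range, ν.real (q ⁻¹' {z}) * φ z := by
  classical
  have hsum : ∀ y, φ (q y) = ∑ z ∈ q.range, (q ⁻¹' {z}).indicator (fun _ => φ z) y := by
    intro y
    rw [Finset.sum_eq_single_of_mem (q y) (q.mem_range_self y)
      fun z _ hz => Set.indicator_of_notMem (s := q ⁻¹' {z}) (Ne.symm hz) _]
    exact (Set.indicator_of_mem rfl _).symm
  simp_rw [hsum]
  rw [integral_finsetSum _ fun z _ => (integrable_const _).indicator (q.measurableSet_fiber z)]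
  simp_rw [integral_indicator_const _ (q.measurableSet_fiber _), smul_eq_mul]

variable [PseudoMetricSpace X] [OpensMeasurableSpace X] [SecondCountableTopology X]

theorem abs_integral_sub_integral_comp_le (ν : Measure X) [IsProbabilityMeasure ν]
    {φ : X → ℝ} (hφ : Measurable φ) {M : ℝ} (hM : ∀ y, |φ y| ≤ M) {r η : ℝ} (hη : 0 ≤ η)
    (hφr : ∀ y y', dist y y' < r → |φ y - φ y'| ≤ η) {q : X → X} (hq : Measurable q) :
    |∫ y, φ y ∂ν - ∫ y, φ (q y) ∂ν| ≤ η + 2 * M * ν.real {y | r ≤ dist (q y) y} := by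
  set bad := {y | r ≤ dist (q y) y}
  have hbad : MeasurableSet bad := measurableSet_le measurable_const (hq.dist measurable_id)
  have hint : ∀ ψ : X → ℝ, Measurable ψ → (∀ y, |ψ y| ≤ M) → Integrable ψ ν := fun ψ hψ hψM =>
    Integrable.of_bound hψ.aestronglyMeasurable M (ae_of_all _ hψM)
  have hpointwise : ∀ y, ‖φ y - φ (q y)‖ ≤ η + 2 * M * bad.indicator 1 y := by
    intro y
    rw [Real.norm_eq_abs]
    by_cases hy : y ∈ bad
    · rw [Set.indicator_of_mem hy, Pi.one_apply]
      linarith [abs_sub (φ y) (φ (q y)), hM y, hM (q y)]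
    · rw [Set.indicator_of_notMem hy, abs_sub_comm]
      linarith [hφr (q y) y (not_le.1 hy)]
  have hind : Integrable (fun y => 2 * M * bad.indicator 1 y) ν :=
    ((integrable_const 1).indicator hbad).const_mul _
  have hbound : Integrable (fun y => η + 2 * M * bad.indicator 1 y) ν :=
    (integrable_const η).add hind
  rw [← integral_sub (hint φ hφ hM) (hint (fun y => φ (q y)) (hφ.comp hq) fun y => hM (q y))]
  refine (norm_integral_le_of_norm_le hbound (ae_of_all _ hpointwise)).trans_eq ?_
  rw [integral_add (integrable_const η) hind, integral_const_mul, integral_indicator_one hbad]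
  simp

theorem exists_finset_sum_approx_integral {ι : Type*} (ν : Measure X) [IsProbabilityMeasure ν]
    {φ : ι → X → ℝ} (hφ : UniformEquicontinuous φ) {M : ℝ} (hM : ∀ i y, |φ i y| ≤ M)
    {ε : ℝ} (hε : 0 < ε) :
    ∃ (t : Finset X) (c : X → ℝ), (∀ z, 0 ≤ c z) ∧ ∑ z ∈ t, c z = 1 ∧
      ∀ i, |∫ y, φ i y ∂ν - ∑ z ∈ t, c z * φ i z| < ε := by
  have : Nonempty X := nonempty_of_isProbabilityMeasure ν
  obtain ⟨r, hr, hφr⟩ := Metric.uniformEquicontinuous_iff.1 hφ (ε / 2) (half_pos hε)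
  let q : ℕ → SimpleFunc X X :=
    SimpleFunc.approxOn id measurable_id Set.univ (Classical.arbitrary X) (Set.mem_univ _)
  have hq : TendstoInMeasure ν (fun n => q n) atTop id :=
    tendstoInMeasure_of_tendsto_ae (fun n => (q n).aestronglyMeasurable) (ae_of_all _ fun y =>
      SimpleFunc.tendsto_approxOn measurable_id (Set.mem_univ _) (by simp))
  have hbad : Tendsto (fun n => 2 * M * ν.real {y | r ≤ dist (q n y) y}) atTop (𝓝 0) := by
    have h := (ENNReal.tendsto_toReal ENNReal.zero_ne_top).comp (hq _ (ENNReal.ofReal_pos.2 hr))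
    simp only [id, edist_dist, ENNReal.ofReal_le_ofReal_iff dist_nonneg] at h
    simpa [measureReal_def] using h.const_mul (2 * M)
  obtain ⟨n, hn⟩ := (hbad.eventually (gt_mem_nhds (half_pos hε))).exists
  refine ⟨(q n).range, fun z => ν.real (q n ⁻¹' {z}), fun z => measureReal_nonneg, ?_, fun i => ?_⟩
  · rw [sum_measureReal_preimage_singleton _ fun z _ => (q n).measurableSet_fiber z,
      SimpleFunc.coe_range, Set.preimage_range, probReal_univ]
  · rw [← (q n).integral_comp_eq_sum]
    calc _ ≤ ε / 2 + 2 * M * ν.real {y | r ≤ dist (q n y) y} :=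
          abs_integral_sub_integral_comp_le ν ((hφ.uniformContinuous i).continuous.measurable)
            (hM i) (half_pos hε).le (fun y y' h => (hφr y y' h i).le) (q n).measurable
      _ < ε := by linarith

end Discretization

theorem UniformContinuous.uniformEquicontinuous_comp_sub {E β : Type*} [SeminormedAddCommGroup E]
    [PseudoMetricSpace β] {k : E → β} (hk : UniformContinuous k) :
    UniformEquicontinuous fun x y => k (x - y) := by
  rw [Metric.uniformEquicontinuous_iff]
  intro ε hε
  obtain ⟨δ, hδ, hkδ⟩ := Metric.uniformContinuous_iff.1 hk ε hε
  exact ⟨δ, hδ, fun y y' h x => hkδ (by rwa [dist_sub_left])⟩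

theorem isProbabilityMeasure_withDensity_ofReal {X : Type*} [MeasurableSpace X] {μ : Measure X}
    {f : X → ℝ} (hf0 : ∀ x, 0 ≤ f x) (hf : Integrable f μ) (hf1 : ∫ x, f x ∂μ = 1) :
    IsProbabilityMeasure (μ.withDensity fun x => ENNReal.ofReal (f x)) := by
  constructor
  rw [withDensity_apply _ MeasurableSet.univ, Measure.restrict_univ,
    ← ofReal_integral_eq_lintegral_ofReal hf (ae_of_all _ hf0), hf1, ENNReal.ofReal_one]

theorem integral_withDensity_ofReal {X : Type*} [MeasurableSpace X] {μ : Measure X}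
    {f : X → ℝ} (hf0 : ∀ x, 0 ≤ f x) (hf : AEMeasurable f μ) (φ : X → ℝ) :
    ∫ y, φ y ∂μ.withDensity (fun x => ENNReal.ofReal (f x)) = ∫ y, φ y * f y ∂μ := by
  rw [integral_withDensity_eq_integral_toReal_smul₀ hf.ennreal_ofReal
    (ae_of_all _ fun _ => ENNReal.ofReal_lt_top)]
  simp only [ENNReal.toReal_ofReal (hf0 _), smul_eq_mul, mul_comm]

theorem exists_mixture_approx_convolution {E : Type*} [SeminormedAddCommGroup E]
    [MeasurableSpace E] [OpensMeasurableSpace E] [SecondCountableTopology E] {μ : Measure E}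
    {f : E → ℝ} (hf0 : ∀ x, 0 ≤ f x) (hf : Integrable f μ) (hf1 : ∫ x, f x ∂μ = 1) {k : E → ℝ}
    (hk : UniformContinuous k) {B : ℝ} (hB : ∀ z, |k z| ≤ B) {ε : ℝ} (hε : 0 < ε) :
    ∃ (m : ℕ) (c : Fin m → ℝ) (p : Fin m → E), (∀ i, 0 ≤ c i) ∧ ∑ i, c i = 1 ∧
      ∀ x, |∫ y, k (x - y) * f y ∂μ - ∑ i, c i * k (x - p i)| < ε := by
  have := isProbabilityMeasure_withDensity_ofReal hf0 hf hf1
  obtain ⟨t, c, hc0, hc1, happrox⟩ := exists_finset_sum_approx_integral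
    (μ.withDensity fun x => ENNReal.ofReal (f x)) hk.uniformEquicontinuous_comp_sub
    (fun x y => hB (x - y)) hε
  have hsum (F : E → ℝ) : ∑ i, F (t.equivFin.symm i) = ∑ z ∈ t, F z := by
    rw [← Finset.sum_coe_sort t F]
    exact Equiv.sum_comp t.equivFin.symm (fun z => F z)
  refine ⟨t.card, fun i => c (t.equivFin.symm i), fun i => t.equivFin.symm i, fun _ => hc0 _,
    (hsum c).trans hc1, fun x => ?_⟩
  rw [hsum fun z => c z * k (x - z), ← integral_withDensity_ofReal hf0 hf.aemeasurable]
  exact happrox x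

theorem stmt_6_general (n : ℕ) (f g : EuclideanSpace ℝ (Fin n) → ℝ)
    (hf0 : ∀ x, 0 ≤ f x) (hfint : Integrable f) (hf1 : ∫ x, f x = 1)
    (hfc : Continuous f) (hfb : ∃ C : ℝ, ∀ x, |f x| ≤ C)
    (hgint : Integrable g) (hg1 : ∫ x, g x = 1)
    (hgc : Continuous g)
    (hgC0 : Tendsto g (cocompact (EuclideanSpace ℝ (Fin n))) (𝓝 0))
    (K : Set (EuclideanSpace ℝ (Fin n))) (hK : IsCompact K)
    (ε : ℝ) (hε : 0 < ε) :
    ∃ (m : ℕ) (c : Fin m → ℝ) (μ : Fin m → EuclideanSpace ℝ (Fin n)) (σ : Fin m → ℝ),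
      (∀ i, 0 < σ i) ∧ (∀ i, 0 ≤ c i) ∧ (∑ i, c i = 1) ∧
      ∀ x ∈ K, |f x - ∑ i, c i * ((σ i) ^ n)⁻¹ * g ((σ i)⁻¹ • (x - μ i))| < ε := by
  obtain ⟨C, hC⟩ := hfb
  have hconv : ∀ᶠ σ in 𝓝[>] (0 : ℝ), ∀ x ∈ K, dist (f x) (∫ u, g u * f (x - σ • u)) < ε / 2 :=
    nhdsWithin_le_nhds <| Metric.tendstoUniformlyOn_iff.1
      (tendstoUniformlyOn_integral_mul_comp_sub_smul hgint hg1 hfc hC hK) _ (half_pos hε)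
  obtain ⟨σ, hconvσ, hσ⟩ := (hconv.and self_mem_nhdsWithin).exists
  let g₀ : ZeroAtInftyContinuousMap (EuclideanSpace ℝ (Fin n)) ℝ := ⟨⟨g, hgc⟩, hgC0⟩
  obtain ⟨m, c, p, hc0, hc1, hmix⟩ := exists_mixture_approx_convolution hf0 hfint hf1
    ((hgc.uniformContinuous_of_tendsto_cocompact hgC0).scaledKernel σ)
    (abs_scaledKernel_le (fun z => g₀.toBCF.norm_coe_le_norm z) hσ) (half_pos hε)
  refine ⟨m, c, p, fun _ => σ, fun _ => hσ, hc0, hc1, fun x hx => ?_⟩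
  have hconv_x := hconvσ x hx
  rw [Real.dist_eq, integral_mul_comp_sub_smul_eq_integral_scaledKernel volume g f hσ] at hconv_x
  have hsum : ∑ i, c i * (σ ^ n)⁻¹ * g (σ⁻¹ • (x - p i)) =
      ∑ i, c i * scaledKernel g σ (x - p i) := by
    simp only [scaledKernel, finrank_euclideanSpace_fin, mul_assoc]
  rw [hsum]
  linarith [abs_sub_le (f x) (∫ y, scaledKernel g σ (x - y) * f y)
    (∑ i, c i * scaledKernel g σ (x - p i)), hmix x]

/-- Theorem (b): if `f` is a bounded continuous pdf, `g ∈ C₀(ℝⁿ)` a pdf, and `K` compact,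
then for every `ε > 0` some finite location-scale mixture of `g` is uniformly within `ε`
of `f` on `K`. -/
theorem stmt_6 (n : ℕ) (f g : EuclideanSpace ℝ (Fin n) → ℝ)
    (hf0 : ∀ x, 0 ≤ f x) (hfint : Integrable f) (hf1 : ∫ x, f x = 1)
    (hfc : Continuous f) (hfb : ∃ C : ℝ, ∀ x, |f x| ≤ C)
    (hg0 : ∀ x, 0 ≤ g x) (hgint : Integrable g) (hg1 : ∫ x, g x = 1)
    (hgc : Continuous g)
    (hgC0 : Tendsto g (cocompact (EuclideanSpace ℝ (Fin n))) (𝓝 0))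
    (K : Set (EuclideanSpace ℝ (Fin n))) (hK : IsCompact K)
    (ε : ℝ) (hε : 0 < ε) :
    ∃ (m : ℕ) (c : Fin m → ℝ) (μ : Fin m → EuclideanSpace ℝ (Fin n)) (σ : Fin m → ℝ),
      (∀ i, 0 < σ i) ∧ (∀ i, 0 ≤ c i) ∧ (∑ i, c i = 1) ∧
      ∀ x ∈ K, |f x - ∑ i, c i * ((σ i) ^ n)⁻¹ * g ((σ i)⁻¹ • (x - μ i))| < ε :=
  stmt_6_general n f g hf0 hfint hf1 hfc hfb hgint hg1 hgc hgC0 K hK ε hε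
end

section
/- Define g : ℝ → ℝ by g(x) = 0 for x < 0 and g(x) = Σ_{i=1}^∞ (2^{2i}/i)[(x − i + 1)^{2i} 1_{[i−1, i−1/2)}(x) + (x − i)^{2i} 1_{[i−1/2, i)}(x)] for x ≥ 0. Then g is continuous, integrable (g ∈ L¹(ℝ)), vanishes at infinity (g ∈ C₀(ℝ)), but g is not in Wiener's algebra 𝒲, i.e., Σ_{y ∈ ℤ} sup_{x ∈ [0,1]} |g(x + y)| = ∞. -/
open MeasureTheory Filter Metric Topology

/-! On `[n, n + 1]` the function is the bump `(2 min (x - n, n + 1 - x)) ^ (2 (n + 1)) / (n + 1)`: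
it vanishes at both ends, so the pieces glue continuously; its maximum `1 / (n + 1)` is taken at
the midpoint, so `0 ≤ g x ≤ 1 / |x|` and `g ∈ C₀(ℝ)`, while the suprema over the unit intervals
form the harmonic series; and its integral is `1 / ((n + 1) (2n + 3))`, which is summable. -/

/-- The function of the counterexample: `g(x) = 0` for `x < 0` and, for `x ≥ 0`,
`g(x) = Σ_{j=1}^∞ (2^{2j}/j) [(x−j+1)^{2j} 1_{[j−1,j−1/2)}(x) + (x−j)^{2j} 1_{[j−1/2,j)}(x)]`
(written below with `j = i + 1`, summing over `i : ℕ`). -/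
noncomputable def gCounter : ℝ → ℝ := fun x =>
  if x < 0 then 0
  else ∑' i : ℕ,
    ((2 : ℝ) ^ (2 * (i + 1)) / (i + 1 : ℝ)) *
      ((x - i) ^ (2 * (i + 1)) * Set.indicator (Set.Ico (i : ℝ) ((i : ℝ) + 1 / 2)) 1 x +
        (x - (i + 1)) ^ (2 * (i + 1)) *
          Set.indicator (Set.Ico ((i : ℝ) + 1 / 2) ((i : ℝ) + 1)) 1 x)

noncomputable def gBump (n : ℕ) (x : ℝ) : ℝ :=
  (2 * min (x - n) (n + 1 - x)) ^ (2 * (n + 1)) / (n + 1)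

lemma gBump_self (n : ℕ) : gBump n n = 0 := by
  simp [gBump]

lemma gBump_add_one (n : ℕ) : gBump n (n + 1) = 0 := by
  simp [gBump]

lemma gCounter_eq_gBump_of_mem_Ico {n : ℕ} {x : ℝ} (hx : x ∈ Set.Ico (n : ℝ) (n + 1)) :
    gCounter x = gBump n x := by
  rw [gCounter, if_neg ((Nat.cast_nonneg n).trans hx.1).not_gt, tsum_eq_single n]
  · rcases lt_or_ge x (n + 1 / 2) with hlt | hge
    · have hmem : x ∈ Set.Ico (n : ℝ) (n + 1 / 2) := ⟨hx.1, hlt⟩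
      rw [Set.indicator_of_mem hmem, Set.indicator_of_notMem fun h => hlt.not_ge h.1,
        gBump, min_eq_left (by linarith), mul_pow]
      simp only [Pi.one_apply]
      ring
    · have hmem : x ∈ Set.Ico (n + 1 / 2 : ℝ) (n + 1) := ⟨hge, hx.2⟩
      rw [Set.indicator_of_notMem fun h => hge.not_gt h.2, Set.indicator_of_mem hmem,
        gBump, min_eq_right (by linarith), mul_pow, ← neg_sub (n + 1 : ℝ) x,
        Even.neg_pow (even_two_mul _)]
      simp only [Pi.one_apply]
      ring
  · intro j hj
    have hxj : x ∉ Set.Ico (j : ℝ) (j + 1) := fun h =>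
      hj ((Nat.floor_eq_on_Ico j x h).symm.trans (Nat.floor_eq_on_Ico n x hx))
    rw [Set.indicator_of_notMem fun h => hxj ⟨h.1, by linarith [h.2]⟩,
      Set.indicator_of_notMem fun h => hxj ⟨by linarith [h.1], h.2⟩]
    ring

lemma gCounter_eq_gBump {n : ℕ} {x : ℝ} (hx : x ∈ Set.Icc (n : ℝ) (n + 1)) :
    gCounter x = gBump n x := by
  rcases hx.2.lt_or_eq with hlt | rfl
  · exact gCounter_eq_gBump_of_mem_Ico ⟨hx.1, hlt⟩
  · have hmem : (n + 1 : ℝ) ∈ Set.Ico ((n + 1 : ℕ) : ℝ) ((n + 1 : ℕ) + 1) := by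
      push_cast
      exact ⟨le_rfl, by linarith⟩
    rw [gCounter_eq_gBump_of_mem_Ico hmem, gBump_add_one, ← gBump_self (n + 1)]
    push_cast
    rfl

lemma gBump_nonneg (n : ℕ) (x : ℝ) : 0 ≤ gBump n x :=
  div_nonneg ((even_two_mul _).pow_nonneg _) (by positivity)

lemma gBump_le {n : ℕ} {x : ℝ} (hx : x ∈ Set.Icc (n : ℝ) (n + 1)) : gBump n x ≤ 1 / (n + 1) := by
  have h0 : 0 ≤ 2 * min (x - n) (n + 1 - x) :=
    mul_nonneg zero_le_two (le_min (by linarith [hx.1]) (by linarith [hx.2]))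
  have h1 : 2 * min (x - n) (n + 1 - x) ≤ 1 := by
    linarith [min_le_left (x - n) (n + 1 - x), min_le_right (x - n) (n + 1 - x)]
  exact div_le_div_of_nonneg_right (pow_le_one₀ h0 h1) (by positivity)

lemma gBump_half (n : ℕ) : gBump n (n + 1 / 2) = 1 / (n + 1) := by
  norm_num [gBump]

lemma continuous_gBump (n : ℕ) : Continuous (gBump n) := by
  unfold gBump
  fun_prop

lemma gCounter_of_nonpos {x : ℝ} (hx : x ≤ 0) : gCounter x = 0 := by
  rcases hx.lt_or_eq with hlt | rfl
  · exact if_pos hlt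
  · rw [← Nat.cast_zero, gCounter_eq_gBump ⟨le_rfl, by simp⟩, gBump_self, Nat.cast_zero]

lemma mem_Icc_natFloor {x : ℝ} (hx : 0 ≤ x) : x ∈ Set.Icc (⌊x⌋₊ : ℝ) (⌊x⌋₊ + 1) :=
  ⟨Nat.floor_le hx, (Nat.lt_floor_add_one x).le⟩

lemma gCounter_nonneg (x : ℝ) : 0 ≤ gCounter x := by
  rcases le_total x 0 with hx | hx
  · rw [gCounter_of_nonpos hx]
  · rw [gCounter_eq_gBump (mem_Icc_natFloor hx)]
    exact gBump_nonneg _ _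

lemma gCounter_le_one_div_floor_add_one {x : ℝ} (hx : 0 ≤ x) :
    gCounter x ≤ 1 / (⌊x⌋₊ + 1) := by
  rw [gCounter_eq_gBump (mem_Icc_natFloor hx)]
  exact gBump_le (mem_Icc_natFloor hx)

lemma gCounter_le_one (x : ℝ) : gCounter x ≤ 1 := by
  rcases le_total x 0 with hx | hx
  · rw [gCounter_of_nonpos hx]
    exact zero_le_one
  · refine (gCounter_le_one_div_floor_add_one hx).trans ?_
    rw [div_le_one (by positivity)]
    linarith [(Nat.cast_nonneg ⌊x⌋₊ : (0 : ℝ) ≤ ⌊x⌋₊)]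

lemma gCounter_le_inv_abs (x : ℝ) : gCounter x ≤ |x|⁻¹ := by
  rcases le_or_gt x 0 with hx | hx
  · rw [gCounter_of_nonpos hx]
    positivity
  · refine (gCounter_le_one_div_floor_add_one hx.le).trans ?_
    rw [abs_of_pos hx, one_div]
    exact inv_anti₀ hx (Nat.lt_floor_add_one x).le

lemma continuousOn_gCounter_Icc (n : ℤ) : ContinuousOn gCounter (Set.Icc (n : ℝ) (n + 1)) := by
  rcases n with m | m
  · refine (continuous_gBump m).continuousOn.congr fun x hx => gCounter_eq_gBump ?_
    simpa using hx
  · refine continuousOn_const.congr fun x hx => gCounter_of_nonpos ?_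
    have := hx.2
    push_cast at this
    linarith

lemma continuous_gCounter : Continuous gCounter :=
  (locallyFinite_Icc_of_tendsto (tendsto_intCast_atTop_iff.2 tendsto_id)
    (tendsto_atBot_add_const_right _ 1 (tendsto_intCast_atBot_iff.2 tendsto_id))).continuous
    (Set.iUnion_eq_univ_iff.2 fun x => ⟨⌊x⌋, Int.floor_le x, (Int.lt_floor_add_one x).le⟩)
    (fun _ => isClosed_Icc) continuousOn_gCounter_Icc

lemma tendsto_gCounter_cocompact : Tendsto gCounter (cocompact ℝ) (𝓝 0) :=
  tendsto_of_tendsto_of_tendsto_of_le_of_le tendsto_const_nhds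
    tendsto_norm_cocompact_atTop.inv_tendsto_atTop gCounter_nonneg gCounter_le_inv_abs

lemma integral_gBump (n : ℕ) :
    ∫ x in (n : ℝ)..(n + 1), gBump n x = 1 / ((n + 1) * (2 * n + 3)) := by
  have hint (a b : ℝ) : IntervalIntegrable (gBump n) volume a b :=
    (continuous_gBump n).intervalIntegrable a b
  have left : ∫ x in (n : ℝ)..(n + 1 / 2), gBump n x =
      (∫ x in (n : ℝ)..(n + 1 / 2), (2 * x - 2 * n) ^ (2 * (n + 1))) / (n + 1) := by
    rw [← intervalIntegral.integral_div]
    refine intervalIntegral.integral_congr fun x hx => ?_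
    rw [Set.uIcc_of_le (by linarith)] at hx
    rw [gBump, min_eq_left (by linarith [hx.2])]
    ring
  have right : ∫ x in (n + 1 / 2 : ℝ)..(n + 1), gBump n x =
      (∫ x in (n + 1 / 2 : ℝ)..(n + 1), (2 * (n + 1) - 2 * x) ^ (2 * (n + 1))) / (n + 1) := by
    rw [← intervalIntegral.integral_div]
    refine intervalIntegral.integral_congr fun x hx => ?_
    rw [Set.uIcc_of_le (by linarith)] at hx
    rw [gBump, min_eq_right (by linarith [hx.1])]
    ring
  rw [← intervalIntegral.integral_add_adjacent_intervals (hint _ _) (hint _ _), left, right,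
    intervalIntegral.integral_comp_mul_sub (fun t => t ^ _) two_ne_zero,
    intervalIntegral.integral_comp_sub_mul (fun t => t ^ _) two_ne_zero, integral_pow, integral_pow]
  norm_num [mul_add]
  field_simp
  ring

lemma integral_gCounter_Icc_le (n : ℕ) :
    ∫ x in Set.Icc (n : ℝ) (n + 1), ‖gCounter x‖ ≤ 1 / (n + 1) ^ 2 := by
  have hEq : Set.EqOn (fun x => ‖gCounter x‖) (gBump n) (Set.Icc (n : ℝ) (n + 1)) := by
    intro x hx
    dsimp only
    rw [Real.norm_of_nonneg (gCounter_nonneg x), gCounter_eq_gBump hx]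
  rw [setIntegral_congr_fun measurableSet_Icc hEq, integral_Icc_eq_integral_Ioc,
    ← intervalIntegral.integral_of_le (by linarith), integral_gBump, sq]
  gcongr <;> linarith

lemma integrable_gCounter : Integrable gCounter := by
  rw [← integrableOn_univ, ← Set.Iic_union_Ici (a := (0 : ℝ))]
  refine IntegrableOn.union ?_ ?_
  · exact integrableOn_zero.congr_fun (fun x hx => (gCounter_of_nonpos hx).symm)
      measurableSet_Iic
  · have hcover : Set.Ici (0 : ℝ) = ⋃ n : ℕ, Set.Icc (n : ℝ) (n + 1) :=
      Set.Subset.antisymm (fun x hx => Set.mem_iUnion.2 ⟨_, mem_Icc_natFloor hx⟩)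
        (Set.iUnion_subset fun n x hx => (Nat.cast_nonneg n).trans hx.1)
    rw [hcover]
    refine integrableOn_iUnion_of_summable_integral_norm
      (fun n => continuous_gCounter.integrableOn_Icc) ?_
    refine Summable.of_nonneg_of_le (fun n => setIntegral_nonneg measurableSet_Icc
      fun x _ => norm_nonneg _) integral_gCounter_Icc_le ?_
    exact_mod_cast (summable_nat_add_iff 1).2 (Real.summable_one_div_nat_pow.2 one_lt_two)

lemma not_summable_iSup_gCounter :
    ¬ Summable (fun y : ℤ => ⨆ x : Set.Icc (0 : ℝ) 1, |gCounter ((x : ℝ) + (y : ℝ))|) := by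
  intro h
  refine Real.not_summable_one_div_natCast ((summable_nat_add_iff 1).1 ?_)
  refine (h.comp_injective Nat.cast_injective).of_nonneg_of_le (fun n => by positivity) fun n => ?_
  have hbdd : BddAbove (Set.range fun x : Set.Icc (0 : ℝ) 1 => |gCounter (x + n)|) := by
    refine ⟨1, ?_⟩
    rintro _ ⟨x, rfl⟩
    simpa [abs_of_nonneg (gCounter_nonneg _)] using gCounter_le_one _
  calc 1 / ((n + 1 : ℕ) : ℝ) = |gCounter ((1 / 2 : ℝ) + n)| := by
        rw [add_comm (1 / 2 : ℝ), gCounter_eq_gBump (n := n) ⟨by linarith, by linarith⟩,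
          gBump_half, abs_of_pos (by positivity)]
        push_cast
        rfl
    _ ≤ _ := le_ciSup (f := fun x : Set.Icc (0 : ℝ) 1 => |gCounter (x + n)|) hbdd
        ⟨1 / 2, by norm_num⟩

/-- `gCounter` is continuous, integrable and vanishes at infinity (so `gCounter ∈ C₀(ℝ)`),
yet it does not belong to Wiener's algebra `𝒲`:
`Σ_{y ∈ ℤ} sup_{x ∈ [0,1]} |g(x + y)| = ∞`. -/
theorem stmt_14 :
    Continuous gCounter ∧ Integrable gCounter ∧
      Tendsto gCounter (cocompact ℝ) (𝓝 0) ∧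
      ¬ Summable (fun y : ℤ => ⨆ x : Set.Icc (0 : ℝ) 1, |gCounter ((x : ℝ) + (y : ℝ))|) :=
  ⟨continuous_gCounter, integrable_gCounter, tendsto_gCounter_cocompact,
    not_summable_iSup_gCounter⟩
end
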